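/- Define H_r^* := Σ_{|η|=r} m_η(a^*)/[η]!, where the sum is over partitions η of r and m_η(a^*) := Σ'_{σ∈S_p} Σ_{l_1 > ... > l_p} (a^*_{l_1})^{η_{σ_1}}⋯(a^*_{l_p})^{η_{σ_p}} (the primed sum over distinct reorderings of η). Then for f ∈ F(Λ_n) and λ ∈ Λ_n: (H_r^* f)(λ) = Σ_J V_{λ,J} f(λ + e_J), summed over subsets J ⊆ {1,...,n} with |J| = r and λ + e_J weakly decreasing, where V_{λ,J} = Π_{j<k, j∈J, k∉J, λ_j=λ_k} (1-q^{k-j+1})/(1-q^{k-j}). In particular H_r^* annihilates F(Λ_n) when r > n. -/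

import Mathlib

open scoped Classical

noncomputable def qint (q : ℝ) (m : ℕ) : ℝ := (1 - q ^ m) / (1 - q)

noncomputable def qfact (q : ℝ) (m : ℕ) : ℝ := ∏ i ∈ Finset.range m, qint q (i + 1)

def ann (l : ℤ) (f : Multiset ℤ → ℂ) : Multiset ℤ → ℂ := fun μ => f (l ::ₘ μ)

noncomputable def cre (q : ℝ) (l : ℤ) (f : Multiset ℤ → ℂ) : Multiset ℤ → ℂ :=
  fun μ => if 0 < μ.count l then (qint q (μ.count l) : ℂ) * f (μ.erase l) else 0

/-- Hopping operator `a_l^* := β_{l+1} β_l^*`. -/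
noncomputable def hopA (q : ℝ) (l : ℤ) (f : Multiset ℤ → ℂ) : Multiset ℤ → ℂ :=
  ann (l + 1) (cre q l f)

/-- The monomial `(a^*_{l_1})^{m_1} ⋯ (a^*_{l_p})^{m_p}` with `l_1 > l_2 > ⋯ > l_p` the distinct
elements of the multiset `ν` and `m_i` their multiplicities in `ν` (the operator for the
largest site is applied last, i.e. outermost). -/
noncomputable def opMon (q : ℝ) (ν : Multiset ℤ) (f : Multiset ℤ → ℂ) : Multiset ℤ → ℂ :=
  (ν.toFinset.sort (· ≤ ·)).foldl (fun g l => (hopA q l)^[ν.count l] g) f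

/-- `(H_r^* f)(μ) = Σ_{|η| = r} (m_η(a^*) f)(μ) / [η]!`; each pair of a partition `η` of `r` and
a strictly decreasing tuple of sites decorated with a reordering of `η` corresponds uniquely to a
multiset `ν` of cardinality `r` (sites = distinct elements, parts = multiplicities). -/
noncomputable def HrStarTerm (q : ℝ) (r : ℕ) (f : Multiset ℤ → ℂ) (μ : Multiset ℤ)
    (ν : Multiset ℤ) : ℂ :=
  if Multiset.card ν = r then
    (((∏ l ∈ ν.toFinset, qfact q (ν.count l))⁻¹ : ℝ) : ℂ) * opMon q ν f μ
  else 0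

/-- `V_{λ,J}`. -/
noncomputable def Vcoef {n : ℕ} (q : ℝ) (lam : Fin n → ℤ) (J : Finset (Fin n)) : ℝ :=
  ∏ j : Fin n, ∏ k : Fin n,
    if j < k ∧ j ∈ J ∧ k ∉ J ∧ lam j = lam k then
      (1 - q ^ ((k : ℕ) - (j : ℕ) + 1)) / (1 - q ^ ((k : ℕ) - (j : ℕ))) else 1

def toM {n : ℕ} (lam : Fin n → ℤ) : Multiset ℤ := Multiset.map lam Finset.univ.val

/-! `a^*_l` moves one particle from site `l` to `l + 1` with weight `[c]`, `c` the occupation of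
`l`. Hence the monomial with exponent multiset `ν` moves every particle of `ν ≤ μ` one step up,
with weight the product of the `q`-falling factorials `[c_l][c_l - 1]⋯[c_l - ν_l + 1]`; dividing by
`[η]!` leaves the Gaussian binomials `∏ [c_v choose ν_v]_q`. The sub-multisets `ν` of `λ` correspond
bijectively to the sets `J` with `λ + e_J` decreasing, namely the first `ν_v` positions of every
block of equal values `v` of `λ`, and for such `J` the product `V_{λ,J}` telescopes inside each
block to the same Gaussian binomial. -/

open Finset

noncomputable def qDescFactorial (q : ℝ) (c m : ℕ) : ℝ := ∏ i ∈ range m, qint q (c - i)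

noncomputable def qBinom (q : ℝ) (c m : ℕ) : ℝ := (qfact q m)⁻¹ * qDescFactorial q c m

lemma qDescFactorial_succ (q : ℝ) (c m : ℕ) :
    qDescFactorial q c (m + 1) = qDescFactorial q c m * qint q (c - m) :=
  prod_range_succ _ _

lemma qBinom_eq_prod {q : ℝ} (hq : q ≠ 1) (c m : ℕ) :
    qBinom q c m = ∏ i ∈ range m, (1 - q ^ (c - i)) / (1 - q ^ (m - i)) := by
  have hfact : qfact q m = ∏ i ∈ range m, qint q (m - i) := by
    rw [qfact, ← prod_range_reflect]
    exact prod_congr rfl fun i hi => by rw [show m - 1 - i + 1 = m - i by grind]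
  rw [qBinom, hfact, qDescFactorial, inv_mul_eq_div, ← prod_div_distrib]
  exact prod_congr rfl fun i _ => div_div_div_cancel_right₀ (sub_ne_zero.2 hq.symm) _ _

lemma one_sub_pow_ne_zero {q : ℝ} (hq0 : 0 ≤ q) (hq1 : q < 1) {e : ℕ} (he : e ≠ 0) :
    1 - q ^ e ≠ 0 :=
  sub_ne_zero.2 (pow_lt_one₀ hq0 hq1 he).ne'

lemma prod_Ico_one_sub_pow_telescope {q : ℝ} (hq0 : 0 ≤ q) (hq1 : q < 1) {j a b : ℕ}
    (hja : j < a) (hab : a ≤ b) :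
    ∏ k ∈ Ico a b, (1 - q ^ (k - j + 1)) / (1 - q ^ (k - j))
      = (1 - q ^ (b - j)) / (1 - q ^ (a - j)) := by
  induction b, hab using Nat.le_induction with
  | base => rw [Ico_self, prod_empty, div_self (one_sub_pow_ne_zero hq0 hq1 (by omega))]
  | succ b hab ih =>
    rw [prod_Ico_succ_top hab, ih, show b - j + 1 = b + 1 - j by omega]
    exact div_mul_div_cancel₀' (one_sub_pow_ne_zero hq0 hq1 (by omega)) _ _

def hopShift (ν μ : Multiset ℤ) : Multiset ℤ := ν.map (· + 1) + (μ - ν)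

lemma count_hopShift (ν μ : Multiset ℤ) (x : ℤ) :
    (hopShift ν μ).count x = ν.count (x - 1) + (μ.count x - ν.count x) := by
  rw [hopShift, Multiset.count_add, Multiset.count_sub]
  simpa using Multiset.count_map_eq_count' (· + 1) ν (add_left_injective 1) (x - 1)

lemma hopShift_hopShift {ν₁ ν₂ : Multiset ℤ} (h : ∀ x ∈ ν₁, x - 1 ∉ ν₂) (μ : Multiset ℤ) :
    hopShift ν₁ (hopShift ν₂ μ) = hopShift (ν₁ + ν₂) μ := by
  ext x
  simp only [count_hopShift, Multiset.count_add]
  by_cases hx : x ∈ ν₁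
  · have := Multiset.count_eq_zero.2 (h x hx)
    omega
  · have := Multiset.count_eq_zero.2 hx
    omega

lemma hopA_apply (q : ℝ) (l : ℤ) (f : Multiset ℤ → ℂ) (μ : Multiset ℤ) :
    hopA q l f μ =
      if 0 < μ.count l then (qint q (μ.count l) : ℂ) * f (hopShift {l} μ) else 0 := by
  simp only [hopA, ann, cre, hopShift, Multiset.map_singleton, Multiset.singleton_add,
    Multiset.sub_singleton]
  rw [Multiset.count_cons_of_ne (by omega), Multiset.erase_cons_tail _ (by omega)]

lemma iterate_hopA_apply (q : ℝ) (l : ℤ) (m : ℕ) (f : Multiset ℤ → ℂ) (μ : Multiset ℤ) :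
    (hopA q l)^[m] f μ =
      if m ≤ μ.count l then
        (qDescFactorial q (μ.count l) m : ℂ) * f (hopShift (Multiset.replicate m l) μ)
      else 0 := by
  induction m generalizing f with
  | zero => simp [qDescFactorial, hopShift]
  | succ m ih =>
    have hcount : (hopShift (Multiset.replicate m l) μ).count l = μ.count l - m := by
      rw [count_hopShift, Multiset.count_replicate_self, Multiset.count_replicate,
        if_neg (by omega)]
      omega
    have hshift : hopShift {l} (hopShift (Multiset.replicate m l) μ)
        = hopShift (Multiset.replicate (m + 1) l) μ := by
      rw [hopShift_hopShift fun x hx => by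
          simp [Multiset.mem_singleton.1 hx, Multiset.mem_replicate],
        Multiset.singleton_add, Multiset.replicate_succ]
    rw [Function.iterate_succ_apply, ih, hopA_apply, hcount, hshift, qDescFactorial_succ]
    by_cases h : m + 1 ≤ μ.count l
    · rw [if_pos (by omega), if_pos (by omega), if_pos h]
      push_cast
      ring
    · by_cases h' : m ≤ μ.count l
      · rw [if_pos h', if_neg (by omega), if_neg h, mul_zero]
      · rw [if_neg h', if_neg h]

lemma count_hopShift_replicate_of_lt (c : ℕ) {s l : ℤ} (h : s < l) (μ : Multiset ℤ) :
    (hopShift (Multiset.replicate c l) μ).count s = μ.count s := by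
  rw [count_hopShift, Multiset.count_replicate, Multiset.count_replicate, if_neg (by omega),
    if_neg (by omega)]
  omega

lemma filter_mem_append_singleton (ν : Multiset ℤ) {L : List ℤ} {l : ℤ} (hl : l ∉ L) :
    ν.filter (· ∈ L ++ [l]) = ν.filter (· ∈ L) + Multiset.replicate (ν.count l) l := by
  ext x
  rw [Multiset.count_add, Multiset.count_filter, Multiset.count_filter, Multiset.count_replicate]
  by_cases hx : x ∈ L
  · simp [hx, show l ≠ x by rintro rfl; exact hl hx]
  · rcases eq_or_ne x l with rfl | hxl
    · simp [hx]
    · simp [hx, hxl, hxl.symm]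

lemma foldl_iterate_hopA_apply (q : ℝ) (ν : Multiset ℤ) {L : List ℤ} (hL : L.Pairwise (· < ·))
    (f : Multiset ℤ → ℂ) (μ : Multiset ℤ) :
    L.foldl (fun g l => (hopA q l)^[ν.count l] g) f μ =
      if ∀ l ∈ L, ν.count l ≤ μ.count l then
        (((L.map fun l => qDescFactorial q (μ.count l) (ν.count l)).prod : ℝ) : ℂ) *
          f (hopShift (ν.filter (· ∈ L)) μ)
      else 0 := by
  induction L using List.reverseRecOn generalizing μ with
  | nil => simp [hopShift]
  | append_singleton L l ih =>
    obtain ⟨hL, -, hlt⟩ := List.pairwise_append.1 hL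
    replace hlt : ∀ s ∈ L, s < l := fun s hs => hlt s hs l (List.mem_singleton_self l)
    set μ₁ := hopShift (Multiset.replicate (ν.count l) l) μ
    have hcount : ∀ s ∈ L, μ₁.count s = μ.count s := fun s hs =>
      count_hopShift_replicate_of_lt _ (hlt s hs) μ
    have hshift : hopShift (ν.filter (· ∈ L)) μ₁ = hopShift (ν.filter (· ∈ L ++ [l])) μ := by
      rw [filter_mem_append_singleton ν fun h => (hlt l h).false, hopShift_hopShift]
      intro x hx
      have := hlt x (Multiset.mem_filter.1 hx).2
      simp only [Multiset.mem_replicate]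
      omega
    have hcond : (∀ s ∈ L, ν.count s ≤ μ₁.count s) ↔ ∀ s ∈ L, ν.count s ≤ μ.count s :=
      forall₂_congr fun s hs => by rw [hcount s hs]
    have hprod : (L.map fun s => qDescFactorial q (μ₁.count s) (ν.count s))
        = L.map fun s => qDescFactorial q (μ.count s) (ν.count s) :=
      List.map_congr_left fun s hs => by rw [hcount s hs]
    rw [List.foldl_append, List.foldl_cons, List.foldl_nil, iterate_hopA_apply, ih hL μ₁]
    simp only [hcond, hprod, hshift, List.mem_append, List.mem_singleton, or_imp, forall_and,
      forall_eq, List.map_append, List.map_singleton, List.prod_append, List.prod_singleton]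
    by_cases h₁ : ν.count l ≤ μ.count l
    · by_cases h₂ : ∀ s ∈ L, ν.count s ≤ μ.count s
      · rw [if_pos h₁, if_pos h₂, if_pos ⟨h₂, h₁⟩]
        push_cast
        ring
      · rw [if_pos h₁, if_neg h₂, if_neg fun h => h₂ h.1, mul_zero]
    · rw [if_neg h₁, if_neg fun h => h₁ h.2]

lemma opMon_apply (q : ℝ) (ν : Multiset ℤ) (f : Multiset ℤ → ℂ) (μ : Multiset ℤ) :
    opMon q ν f μ =
      if ν ≤ μ then
        ((∏ l ∈ ν.toFinset, qDescFactorial q (μ.count l) (ν.count l) : ℝ) : ℂ) * f (hopShift ν μ)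
      else 0 := by
  have hcond : (∀ l ∈ ν.toFinset.sort (· ≤ ·), ν.count l ≤ μ.count l) ↔ ν ≤ μ := by
    simp only [mem_sort, Multiset.mem_toFinset, Multiset.le_iff_count]
    refine ⟨fun h a => ?_, fun h a _ => h a⟩
    by_cases ha : a ∈ ν
    · exact h a ha
    · simp [Multiset.count_eq_zero.2 ha]
  have hprod :
      ((ν.toFinset.sort (· ≤ ·)).map fun l => qDescFactorial q (μ.count l) (ν.count l)).prod
      = ∏ l ∈ ν.toFinset, qDescFactorial q (μ.count l) (ν.count l) := by
    rw [← Multiset.prod_coe, ← Multiset.map_coe, sort_eq]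
    rfl
  have hfilter : ν.filter (· ∈ ν.toFinset.sort (· ≤ ·)) = ν :=
    Multiset.filter_eq_self.2 fun a ha => by simpa using ha
  rw [opMon, foldl_iterate_hopA_apply q ν (sortedLT_sort _).pairwise]
  simp only [hcond, hprod, hfilter]

lemma HrStarTerm_apply (q : ℝ) (r : ℕ) (f : Multiset ℤ → ℂ) (μ ν : Multiset ℤ) :
    HrStarTerm q r f μ ν =
      if Multiset.card ν = r ∧ ν ≤ μ then
        ((∏ l ∈ ν.toFinset, qBinom q (μ.count l) (ν.count l) : ℝ) : ℂ) * f (hopShift ν μ)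
      else 0 := by
  rw [HrStarTerm, opMon_apply]
  by_cases hcard : Multiset.card ν = r <;> by_cases hν : ν ≤ μ <;>
    simp only [hcard, hν, if_true, if_false, and_true, and_false, mul_zero]
  simp only [qBinom, prod_mul_distrib, prod_inv_distrib]
  push_cast
  ring

lemma support_HrStarTerm_subset (q : ℝ) (r : ℕ) (f : Multiset ℤ → ℂ) (μ : Multiset ℤ) :
    (Function.support fun ν => HrStarTerm q r f μ ν)
      ⊆ (μ.powerset.toFinset : Set (Multiset ℤ)) := by
  intro ν hν
  rw [Function.mem_support, HrStarTerm_apply] at hν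
  rw [mem_coe, Multiset.mem_toFinset, Multiset.mem_powerset]
  by_contra h
  exact hν (if_neg fun hh => h hh.2)

lemma map_valEmbedding_filter_Ico {n a b : ℕ} (hb : b ≤ n) :
    ({k : Fin n | a ≤ (k : ℕ) ∧ (k : ℕ) < b} : Finset (Fin n)).map Fin.valEmbedding = Ico a b := by
  ext x
  simp only [mem_map, mem_filter, mem_univ, true_and, Fin.valEmbedding_apply, mem_Ico]
  exact ⟨by rintro ⟨k, hk, rfl⟩; exact hk, fun hx => ⟨⟨x, by omega⟩, hx, rfl⟩⟩

lemma card_filter_Ico_val {n a b : ℕ} (hb : b ≤ n) :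
    #{k : Fin n | a ≤ (k : ℕ) ∧ (k : ℕ) < b} = b - a := by
  rw [← card_map Fin.valEmbedding, map_valEmbedding_filter_Ico hb, Nat.card_Ico]

lemma prod_filter_Ico_val {M : Type*} [CommMonoid M] {n a b : ℕ} (g : ℕ → M) (hb : b ≤ n) :
    ∏ k ∈ {k : Fin n | a ≤ (k : ℕ) ∧ (k : ℕ) < b}, g k = ∏ x ∈ Ico a b, g x := by
  rw [← map_valEmbedding_filter_Ico hb, prod_map]
  rfl

lemma val_lt_card_filter_iff {n : ℕ} {P : Fin n → Prop} [DecidablePred P]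
    (hP : IsLowerSet {k | P k}) (k : Fin n) : (k : ℕ) < #{j | P j} ↔ P k := by
  constructor
  · intro hk
    by_contra hPk
    have hsub : ({j | P j} : Finset (Fin n)) ⊆ Iio k := fun j hj =>
      mem_Iio.2 (lt_of_not_ge fun hkj => hPk (hP hkj (mem_filter.1 hj).2))
    have := card_le_card hsub
    rw [Fin.card_Iio] at this
    omega
  · intro hPk
    have hsub : Iic k ⊆ ({j | P j} : Finset (Fin n)) := fun j hj =>
      mem_filter.2 ⟨mem_univ _, hP (mem_Iic.1 hj) hPk⟩
    have := card_le_card hsub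
    rw [Fin.card_Iic] at this
    omega

section Blocks

variable {n : ℕ}

lemma count_map_val (lam : Fin n → ℤ) (J : Finset (Fin n)) (v : ℤ) :
    (J.val.map lam).count v = #{k ∈ J | lam k = v} := by
  rw [Multiset.count_map]
  simp_rw [eq_comm (a := v)]
  rfl

lemma count_toM (lam : Fin n → ℤ) (v : ℤ) : (toM lam).count v = #{k | lam k = v} :=
  count_map_val lam univ v

lemma hopShift_map_toM (lam : Fin n → ℤ) (J : Finset (Fin n)) :
    hopShift (J.val.map lam) (toM lam) = toM fun k => lam k + if k ∈ J then 1 else 0 := by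
  have hsplit : ∀ g : Fin n → ℤ, toM g = J.val.map g + Jᶜ.val.map g := fun g => by
    rw [toM, ← union_compl J, ← disjUnion_eq_union J Jᶜ disjoint_compl_right, disjUnion_val,
      Multiset.map_add]
  rw [hsplit lam, hsplit, hopShift, add_tsub_cancel_left, Multiset.map_map]
  congr 1
  · exact Multiset.map_congr rfl fun k hk => by simpa using hk
  · exact Multiset.map_congr rfl fun k hk => by simp [mem_compl.1 hk]

def blockStart (lam : Fin n → ℤ) (v : ℤ) : ℕ := #{k | v < lam k}

lemma blockStart_add_count (lam : Fin n → ℤ) (v : ℤ) :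
    blockStart lam v + (toM lam).count v = #{k | v ≤ lam k} := by
  rw [blockStart, count_toM, ← card_union_of_disjoint (disjoint_filter.2 fun k _ h => h.ne')]
  congr 1
  ext k
  simp [le_iff_lt_or_eq, eq_comm]

lemma blockStart_add_count_le (lam : Fin n → ℤ) (v : ℤ) :
    blockStart lam v + (toM lam).count v ≤ n := by
  rw [blockStart_add_count]
  exact (card_filter_le _ _).trans (card_fin n).le

variable {lam : Fin n → ℤ}

lemma eq_iff_mem_block (hlam : Antitone lam) (v : ℤ) (k : Fin n) :
    lam k = v ↔ blockStart lam v ≤ k ∧ (k : ℕ) < blockStart lam v + (toM lam).count v := by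
  rw [blockStart_add_count, ← not_lt, blockStart,
    val_lt_card_filter_iff (fun _ _ hij hj => hj.trans_le (hlam hij)),
    val_lt_card_filter_iff (fun _ _ hij hj => hj.trans (hlam hij))]
  omega

/-- For antitone `lam` the positions with value `v` form the interval
`[blockStart lam v, blockStart lam v + count v)`; `blockPrefix lam m` keeps the first `m v` of
them. -/
def blockPrefix (lam : Fin n → ℤ) (m : ℤ → ℕ) : Finset (Fin n) :=
  {j | (j : ℕ) < blockStart lam (lam j) + m (lam j)}

lemma filter_blockPrefix_eq (hlam : Antitone lam) {m : ℤ → ℕ} {v : ℤ}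
    (hm : m v ≤ (toM lam).count v) :
    ({j ∈ blockPrefix lam m | lam j = v} : Finset (Fin n))
      = ({j | blockStart lam v ≤ (j : ℕ) ∧ (j : ℕ) < blockStart lam v + m v} : Finset (Fin n)) := by
  ext j
  simp only [blockPrefix, mem_filter, mem_univ, true_and]
  constructor
  · rintro ⟨hj, rfl⟩
    exact ⟨((eq_iff_mem_block hlam _ j).1 rfl).1, hj⟩
  · rintro ⟨h₁, h₂⟩
    obtain rfl : lam j = v := (eq_iff_mem_block hlam v j).2 ⟨h₁, by omega⟩
    exact ⟨h₂, rfl⟩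

lemma map_blockPrefix_count (hlam : Antitone lam) {ν : Multiset ℤ} (hν : ν ≤ toM lam) :
    (blockPrefix lam ν.count).val.map lam = ν := by
  ext v
  have hm := Multiset.le_iff_count.1 hν v
  rw [count_map_val, filter_blockPrefix_eq hlam hm,
    card_filter_Ico_val (by have := blockStart_add_count_le lam v; omega)]
  omega

lemma antitone_raise_blockPrefix (hlam : Antitone lam) (m : ℤ → ℕ) :
    Antitone fun k => lam k + if k ∈ blockPrefix lam m then 1 else 0 := by
  intro j k hjk
  dsimp only
  have hl := hlam hjk
  by_cases hk : k ∈ blockPrefix lam m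
  · rcases hl.lt_or_eq with hlt | heq
    · split_ifs <;> omega
    · have hj : j ∈ blockPrefix lam m := by
        simp only [blockPrefix, mem_filter, mem_univ, true_and] at hk ⊢
        rw [← heq]
        exact lt_of_le_of_lt hjk hk
      simp only [hj, hk, if_true]
      omega
  · simp only [hk, if_false]
    split_ifs <;> omega

lemma mem_of_antitone_raise {J : Finset (Fin n)}
    (hJ : Antitone fun k => lam k + if k ∈ J then 1 else 0) {j k : Fin n} (hjk : j ≤ k)
    (hv : lam k = lam j) (hk : k ∈ J) : j ∈ J := by
  by_contra hj
  have := hJ hjk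
  simp only [hj, hk, if_true, if_false] at this
  omega

lemma blockPrefix_count_map_eq (hlam : Antitone lam) {J : Finset (Fin n)}
    (hJ : Antitone fun k => lam k + if k ∈ J then 1 else 0) :
    blockPrefix lam (J.val.map lam).count = J := by
  ext j
  set v := lam j
  have hP : IsLowerSet {k | v < lam k ∨ (k ∈ J ∧ lam k = v)} := by
    rintro a b hba (ha | ⟨haJ, hav⟩)
    · exact Or.inl (ha.trans_le (hlam hba))
    · rcases (hlam hba).lt_or_eq with hlt | heq
      · exact Or.inl (hav ▸ hlt)
      · exact Or.inr ⟨mem_of_antitone_raise hJ hba heq haJ, heq ▸ hav⟩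
  have hcard : #{k | v < lam k ∨ (k ∈ J ∧ lam k = v)}
      = blockStart lam v + (J.val.map lam).count v := by
    have hunion : ({k | v < lam k ∨ (k ∈ J ∧ lam k = v)} : Finset (Fin n))
        = ({k | v < lam k} : Finset (Fin n)) ∪ {k ∈ J | lam k = v} := by
      ext k
      simp
    rw [hunion, blockStart, count_map_val, card_union_of_disjoint]
    exact disjoint_left.2 fun k hk hk' => (mem_filter.1 hk).2.ne' (mem_filter.1 hk').2
  simp only [blockPrefix, mem_filter, mem_univ, true_and]
  rw [← hcard, val_lt_card_filter_iff hP]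
  simp [v]

end Blocks

section Vcoef

variable {q : ℝ} {n : ℕ} {lam : Fin n → ℤ}

lemma Vcoef_eq_prod_mem (J : Finset (Fin n)) :
    Vcoef q lam J = ∏ j ∈ J, ∏ k ∈ ({k | j < k ∧ k ∉ J ∧ lam j = lam k} : Finset (Fin n)),
      (1 - q ^ ((k : ℕ) - (j : ℕ) + 1)) / (1 - q ^ ((k : ℕ) - (j : ℕ))) := by
  rw [Vcoef, ← prod_subset (subset_univ J) fun j _ hj =>
    prod_eq_one fun k _ => if_neg fun h => hj h.2.1]
  refine prod_congr rfl fun j hj => ?_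
  rw [prod_filter]
  exact prod_congr rfl fun k _ => by simp only [hj, true_and]

lemma prod_telescope_of_mem_blockPrefix (hq0 : 0 ≤ q) (hq1 : q < 1) (hlam : Antitone lam)
    {m : ℤ → ℕ}
    (hm : ∀ v, m v ≤ (toM lam).count v) {j : Fin n} (hj : j ∈ blockPrefix lam m) :
    ∏ k ∈ ({k | j < k ∧ k ∉ blockPrefix lam m ∧ lam j = lam k} : Finset (Fin n)),
        (1 - q ^ ((k : ℕ) - (j : ℕ) + 1)) / (1 - q ^ ((k : ℕ) - (j : ℕ)))
      = (1 - q ^ (blockStart lam (lam j) + (toM lam).count (lam j) - j))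
        / (1 - q ^ (blockStart lam (lam j) + m (lam j) - j)) := by
  set v := lam j
  set S := blockStart lam v
  have hjm : (j : ℕ) < S + m v := (mem_filter.1 hj).2
  have hfilter : ({k | j < k ∧ k ∉ blockPrefix lam m ∧ v = lam k} : Finset (Fin n))
      = ({k | S + m v ≤ (k : ℕ) ∧ (k : ℕ) < S + (toM lam).count v} : Finset (Fin n)) := by
    ext k
    simp only [blockPrefix, mem_filter, mem_univ, true_and, not_lt, Fin.lt_def]
    constructor
    · rintro ⟨-, hk, hv⟩
      rw [← hv] at hk
      exact ⟨hk, ((eq_iff_mem_block hlam v k).1 hv.symm).2⟩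
    · rintro ⟨h₁, h₂⟩
      have hv : lam k = v := (eq_iff_mem_block hlam v k).2 ⟨by omega, h₂⟩
      rw [hv]
      exact ⟨by omega, h₁, rfl⟩
  rw [hfilter, prod_filter_Ico_val (fun x => (1 - q ^ (x - j + 1)) / (1 - q ^ (x - j)))
    (blockStart_add_count_le lam v), prod_Ico_one_sub_pow_telescope hq0 hq1 hjm
    (by have := hm v; omega)]

lemma prod_filter_blockPrefix (hlam : Antitone lam) {m : ℤ → ℕ} {v : ℤ}
    (hm : m v ≤ (toM lam).count v) :
    ∏ j ∈ ({j ∈ blockPrefix lam m | lam j = v} : Finset (Fin n)),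
        (1 - q ^ (blockStart lam v + (toM lam).count v - j))
          / (1 - q ^ (blockStart lam v + m v - j))
      = ∏ i ∈ range (m v), (1 - q ^ ((toM lam).count v - i)) / (1 - q ^ (m v - i)) := by
  rw [filter_blockPrefix_eq hlam hm, prod_filter_Ico_val
    (fun x => (1 - q ^ (blockStart lam v + (toM lam).count v - x))
      / (1 - q ^ (blockStart lam v + m v - x)))
    (by have := blockStart_add_count_le lam v; omega), prod_Ico_eq_prod_range,
    Nat.add_sub_cancel_left]
  simp only [Nat.add_sub_add_left]

lemma Vcoef_blockPrefix (hq0 : 0 ≤ q) (hq1 : q < 1) (hlam : Antitone lam) {m : ℤ → ℕ}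
    (hm : ∀ v, m v ≤ (toM lam).count v) {T : Finset ℤ} (hT : ∀ v, 0 < m v → v ∈ T) :
    Vcoef q lam (blockPrefix lam m) = ∏ v ∈ T, qBinom q ((toM lam).count v) (m v) := by
  have hmaps : ∀ j ∈ blockPrefix lam m, lam j ∈ T := fun j hj => hT _ <| by
    have := (mem_filter.1 hj).2
    have := ((eq_iff_mem_block hlam (lam j) j).1 rfl).1
    omega
  rw [Vcoef_eq_prod_mem,
    prod_congr rfl fun j hj => prod_telescope_of_mem_blockPrefix hq0 hq1 hlam hm hj,
    ← prod_fiberwise_of_maps_to hmaps]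
  refine prod_congr rfl fun v _ => ?_
  rw [prod_congr rfl fun j hj => by rw [(mem_filter.1 hj).2], prod_filter_blockPrefix hlam (hm v),
    qBinom_eq_prod hq1.ne]

end Vcoef

lemma sum_HrStarTerm_eq_sum_Vcoef {q : ℝ} (hq0 : 0 ≤ q) (hq1 : q < 1) (r : ℕ) {n : ℕ}
    {lam : Fin n → ℤ} (hlam : Antitone lam) (f : Multiset ℤ → ℂ) :
    ∑ ν ∈ (toM lam).powerset.toFinset, HrStarTerm q r f (toM lam) ν
      = ∑ J : Finset (Fin n),
          if J.card = r ∧ Antitone (fun k => lam k + if k ∈ J then 1 else 0) then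
            ((Vcoef q lam J : ℝ) : ℂ) * f (toM fun k => lam k + if k ∈ J then 1 else 0)
          else 0 := by
  simp only [HrStarTerm_apply]
  rw [← sum_filter, ← sum_filter]
  refine sum_nbij' (fun ν => blockPrefix lam ν.count) (fun J => J.val.map lam) ?_ ?_ ?_ ?_ ?_
  all_goals simp only [mem_filter, Multiset.mem_toFinset, Multiset.mem_powerset, mem_univ,
    true_and]
  · rintro ν ⟨hν, hcard, -⟩
    refine ⟨?_, antitone_raise_blockPrefix hlam _⟩
    rw [← hcard, ← card_val, ← Multiset.card_map lam, map_blockPrefix_count hlam hν]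
  · rintro J ⟨hcard, -⟩
    have hle : J.val.map lam ≤ toM lam := Multiset.map_le_map (val_le_iff.2 (subset_univ J))
    exact ⟨hle, by rw [Multiset.card_map]; exact hcard, hle⟩
  · rintro ν ⟨hν, -⟩
    exact map_blockPrefix_count hlam hν
  · rintro J ⟨-, hJ⟩
    exact blockPrefix_count_map_eq hlam hJ
  · rintro ν ⟨hν, -⟩
    have hm : ∀ v, ν.count v ≤ (toM lam).count v := Multiset.le_iff_count.1 hν
    rw [Vcoef_blockPrefix hq0 hq1 hlam hm fun v hv =>
        Multiset.mem_toFinset.2 (Multiset.count_pos.1 hv),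
      ← hopShift_map_toM, map_blockPrefix_count hlam hν]

theorem HrStar_explicit_action_general (q : ℝ) (hq : 0 < q) (hq1 : q < 1) (r : ℕ)
    (n : ℕ) (lam : Fin n → ℤ) (hlam : Antitone lam) (f : Multiset ℤ → ℂ) :
    (Function.support fun ν : Multiset ℤ => HrStarTerm q r f (toM lam) ν).Finite ∧
    (∑ᶠ ν : Multiset ℤ, HrStarTerm q r f (toM lam) ν
      = ∑ J : Finset (Fin n),
          if J.card = r ∧ Antitone (fun k => lam k + if k ∈ J then 1 else 0) then
            ((Vcoef q lam J : ℝ) : ℂ) * f (toM fun k => lam k + if k ∈ J then 1 else 0)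
          else 0) ∧
    (r > n → ∑ᶠ ν : Multiset ℤ, HrStarTerm q r f (toM lam) ν = 0) := by
  have hsupp := support_HrStarTerm_subset q r f (toM lam)
  have hsum := (finsum_eq_sum_of_support_subset _ hsupp).trans
    (sum_HrStarTerm_eq_sum_Vcoef hq.le hq1 r hlam f)
  refine ⟨(finite_toSet _).subset hsupp, hsum, fun hrn => ?_⟩
  rw [hsum]
  refine sum_eq_zero fun J _ => if_neg fun hJ => ?_
  have := card_le_univ J
  rw [Fintype.card_fin] at this
  omega

theorem HrStar_explicit_action (q : ℝ) (hq : 0 < q) (hq1 : q < 1) (r : ℕ) (hr : 1 ≤ r)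
    (n : ℕ) (lam : Fin n → ℤ) (hlam : Antitone lam) (f : Multiset ℤ → ℂ) :
    (Function.support fun ν : Multiset ℤ => HrStarTerm q r f (toM lam) ν).Finite ∧
    (∑ᶠ ν : Multiset ℤ, HrStarTerm q r f (toM lam) ν
      = ∑ J : Finset (Fin n),
          if J.card = r ∧ Antitone (fun k => lam k + if k ∈ J then 1 else 0) then
            ((Vcoef q lam J : ℝ) : ℂ) * f (toM fun k => lam k + if k ∈ J then 1 else 0)
          else 0) ∧
    (r > n → ∑ᶠ ν : Multiset ℤ, HrStarTerm q r f (toM lam) ν = 0) :=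
  HrStar_explicit_action_general q hq hq1 r n lam hlam f
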